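/- arXiv:2011.14848 — 4 statements merged into one kernel-verified Lean document; each statement's English description precedes it below -/
import Mathlib

section
/- If the internal behavior of the concrete closed loop (C_q ∘ Z) × S_τ, mapped through the state relation, is included in the internal behavior of the abstract closed loop C_q × S_q, then the external behavior of the concrete closed loop, mapped through the output relation Z, is included in the external behavior of the abstract closed loop. -/
structure Sys (X U Y : Type) where
  init : Set X
  tr : X → U → X → Prop
  H : X → Y

namespace Sys

variable {X U Y : Type}

/-- the set of `u`-successors of `x` -/
def Post (S : Sys X U Y) (x : X) (u : U) : Set X := {x' | S.tr x u x'}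

/-- inputs admissible at state `x` -/
def adm (S : Sys X U Y) (x : X) : Set U := {u | (S.Post x u).Nonempty}

/-- inputs admissible at output `y` (admissible at every state with that output) -/
def admOut (S : Sys X U Y) (y : Y) : Set U := {u | ∀ x, S.H x = y → u ∈ S.adm x}

/-- `u`-successor observations of output `y` -/
def obsPost (S : Sys X U Y) (y : Y) (u : U) : Set Y :=
  S.H '' (⋃ x ∈ {x | S.H x = y}, S.Post x u)

end Sys

/-- Feedback refinement relation from `S₁` to `S₂`. -/
def IsFRR {X₁ X₂ U Y₁ Y₂ : Type} (S₁ : Sys X₁ U Y₁) (S₂ : Sys X₂ U Y₂)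
    (Q : Set (X₁ × X₂)) : Prop :=
  (∀ x₁, ∃ x₂, (x₁, x₂) ∈ Q) ∧
  (∀ p ∈ Q, S₂.adm p.2 ⊆ S₁.adm p.1) ∧
  (∀ p ∈ Q, ∀ u ∈ S₂.adm p.2, ∀ x₁' ∈ S₁.Post p.1 u, ∀ x₂',
      (x₁', x₂') ∈ Q → x₂' ∈ S₂.Post p.2 u) ∧
  (∀ p ∈ Q, p.1 ∈ S₁.init → p.2 ∈ S₂.init)

/-- Output-feedback refinement relation `Z` over underlying FRR `Q`. -/
def IsOFRR {X₁ X₂ U Y₁ Y₂ : Type} (S₁ : Sys X₁ U Y₁) (S₂ : Sys X₂ U Y₂)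
    (Q : Set (X₁ × X₂)) (Z : Set (Y₁ × Y₂)) : Prop :=
  IsFRR S₁ S₂ Q ∧
  (∀ p ∈ Z, S₂.admOut p.2 ⊆ S₁.admOut p.1) ∧
  (∀ p ∈ Q, (S₁.H p.1, S₂.H p.2) ∈ Z) ∧
  (∀ p ∈ Z, ∃ q ∈ Q, S₁.H q.1 = p.1 ∧ S₂.H q.2 = p.2)

/-- `S₁` is feedback-composable with `S₂`: whenever `S₁` blocks on the output of
`S₂`, `S₂` blocks on the output of `S₁`. -/
def FBComposable {Xa Xb Ya Yb : Type} (A : Sys Xa Yb Ya) (B : Sys Xb Ya Yb) : Prop :=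
  ∀ xa xb, ¬(A.Post xa (B.H xb)).Nonempty → ¬(B.Post xb (A.H xa)).Nonempty

/-- Serial composition of a controller `Cq` (with abstract output inputs) after the
static output map `z` (the OFRR viewed as a static map on outputs). -/
def serialZ {Xc Yτ Yq U : Type} (Cq : Sys Xc Yq U) (z : Yτ → Yq) : Sys Xc Yτ U where
  init := Cq.init
  tr := fun a y a' => Cq.tr a (z y) a'
  H := Cq.H

/-- External behavior of the feedback composition `A × B`: sequences of output pairs
realized by synchronized runs of `A` and `B`. -/
def ExtBehFB {Xa Xb Ya Yb : Type} (A : Sys Xa Yb Ya) (B : Sys Xb Ya Yb) :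
    Set (ℕ → Ya × Yb) :=
  {f | ∃ (xa : ℕ → Xa) (xb : ℕ → Xb), xa 0 ∈ A.init ∧ xb 0 ∈ B.init ∧
    (∀ i, A.tr (xa i) (B.H (xb i)) (xa (i+1)) ∧ B.tr (xb i) (A.H (xa i)) (xb (i+1))) ∧
    (∀ i, f i = (A.H (xa i), B.H (xb i)))}

/-- Internal behavioral inclusion (through the state relation `Q`) of the concrete
closed loop in the abstract closed loop implies external behavioral inclusion
(through the output relation `Z`). -/
theorem internal_implies_external_inclusion {Xc Xτ Xq U Yτ Yq : Type}
    (Sτ : Sys Xτ U Yτ) (Sq : Sys Xq U Yq) (Cq : Sys Xc Yq U)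
    (z : Yτ → Yq) (Q : Set (Xτ × Xq))
    (hofrr : IsOFRR Sτ Sq Q {p | p.2 = z p.1})
    (hcompq : FBComposable Cq Sq)
    (hcompτ : FBComposable (serialZ Cq z) Sτ)
    (hint : ∀ (xc : ℕ → Xc) (x : ℕ → Xτ),
      xc 0 ∈ Cq.init → x 0 ∈ Sτ.init →
      (∀ i, Cq.tr (xc i) (z (Sτ.H (x i))) (xc (i+1)) ∧
            Sτ.tr (x i) (Cq.H (xc i)) (x (i+1))) →
      ∀ xq : ℕ → Xq, (∀ i, (x i, xq i) ∈ Q) →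
        xq 0 ∈ Sq.init ∧
        ∀ i, Cq.tr (xc i) (Sq.H (xq i)) (xc (i+1)) ∧
             Sq.tr (xq i) (Cq.H (xc i)) (xq (i+1))) :
    ∀ f ∈ ExtBehFB (serialZ Cq z) Sτ,
      (fun i => ((f i).1, z (f i).2)) ∈ ExtBehFB Cq Sq := by
  rintro f ⟨xc, x, hc0, hx0, htr, hf⟩
  choose xq hxq using fun i => hofrr.1.1 (x i)
  obtain ⟨hq0, hqtr⟩ := hint xc x hc0 hx0 (fun i => (htr i)) xq hxq
  have hout : ∀ i, Sq.H (xq i) = z (Sτ.H (x i)) := fun i =>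
    hofrr.2.2.1 _ (hxq i)
  refine ⟨xc, xq, hc0, hq0, fun i => ⟨(hqtr i).1, (hqtr i).2⟩, fun i => ?_⟩
  simp [hf i, serialZ, hout i]
end

section
/- A finite system S_q (with all states initial) is detectable if and only if in the knowledge-NFA A produced by the pairwise-subset construction (Algorithm 1), every state reachable from some cycle is a singleton subset of X_q. -/
/-- One observation step: successors of `s` under input `u` whose output is `y`. -/
def obsStep {X U Y : Type} (S : Sys X U Y) (s : Set X) (u : U) (y : Y) : Set X :=
  {x' | (∃ x ∈ s, S.tr x u x') ∧ S.H x' = y}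

/-- `Post_α^β(X)`: states consistent with initial observation `y0` and the
input/observation sequence `l`. -/
def ReachIO {X U Y : Type} (S : Sys X U Y) (y0 : Y) (l : List (U × Y)) : Set X :=
  l.foldl (fun s p => obsStep S s p.1 p.2) {x | S.H x = y0}

/-- Detectability: sufficiently long input/observation histories determine the
current state uniquely. -/
def Detectable {X U Y : Type} (S : Sys X U Y) : Prop :=
  ∃ N : ℕ, ∀ (y0 : Y) (l : List (U × Y)), N ≤ l.length →
    (ReachIO S y0 l).Subsingleton

/-- Transition relation of the knowledge NFA `A` from the pairwise-subset
construction (Algorithm 1): states are `⋄` (= `none`) together with nonempty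
subsets of `X` of cardinality at most 2; labels are pairs `(Option U, Y)` where the
first component `none` stands for the dummy input `φ`. -/
def Adelta {X U Y : Type} (S : Sys X U Y)
    (a : Option (Set X)) (l : Option U × Y) (b : Option (Set X)) : Prop :=
  match a, l, b with
  | none, (none, y), some z =>
      z.Nonempty ∧ (∃ c d, z = {c, d}) ∧ z ⊆ {x | S.H x = y}
  | some q, (some u, y), some z =>
      z.Nonempty ∧ (∃ c d, z = {c, d}) ∧ z ⊆ obsStep S q u y
  | _, _, _ => False

/-- One-step reachability in the NFA `A` (under some label). -/
def AR {X U Y : Type} (S : Sys X U Y) (a b : Option (Set X)) : Prop :=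
  ∃ l, Adelta S a l b

/-- Limit set of `A`: states reachable (from the initial state `⋄`) through some
cycle. -/
def LP {X U Y : Type} (S : Sys X U Y) : Set (Option (Set X)) :=
  {q | ∃ c, Relation.ReflTransGen (AR S) none c ∧
    Relation.TransGen (AR S) c c ∧ Relation.ReflTransGen (AR S) c q}

/-- The extension of `Adelta` to label sequences. -/
def AdeltaStar {X U Y : Type} (S : Sys X U Y) :
    Option (Set X) → List (Option U × Y) → Option (Set X) → Prop
  | a, [], b => a = b
  | a, l :: ls, b => ∃ c, Adelta S a l c ∧ AdeltaStar S c ls b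

/-- Every pair of input sequence of length `t` and matching observation sequence
drives `⋄` into the limit set. -/
def transientOK {X U Y : Type} (S : Sys X U Y) (t : ℕ) : Prop :=
  ∀ (y0 : Y) (l : List (U × Y)) (q : Option (Set X)), l.length = t →
    AdeltaStar S none ((none, y0) :: l.map (fun p => (some p.1, p.2))) q →
    q ∈ LP S

/-- The transient period `T_t` of the knowledge NFA of `S`. -/
noncomputable def Tt {X U Y : Type} (S : Sys X U Y) : ℕ := sInf {t | transientOK S t}

/-!
A pair `{a, b}` is reached by the knowledge NFA along a history exactly when `a` and `b` are
both consistent with that history. A non-singleton state behind a cycle is therefore, by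
pumping the cycle, consistent with arbitrarily long histories, which defeats detectability.
Conversely, the run of a history longer than the number of NFA states repeats a state, so
every pair consistent with a long history lies behind a cycle and is a singleton.
-/

open Relation Order in
theorem Relation.exists_cycle_of_card_le {α : Type*} [Finite α] {r : α → α → Prop} {f : ℕ → α}
    {n : ℕ} (hn : Nat.card α ≤ n) (hf : ∀ i < n, r (f i) (f (i + 1))) :
    ∃ c, ReflTransGen r (f 0) c ∧ TransGen r c c ∧ ReflTransGen r c (f n) := by
  have segment {i j : ℕ} (hij : i ≤ j) (hjn : j ≤ n) : ReflTransGen r (f i) (f j) :=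
    (reflTransGen_of_succ_of_le (fun a b => r (f a) (f b))
      (fun k hk => hf k (by simp at hk; omega)) hij).lift f fun _ _ h => h
  obtain ⟨i, j, hij, hjn, hfij⟩ : ∃ i j, i < j ∧ j ≤ n ∧ f i = f j := by
    have := Fintype.ofFinite α
    obtain ⟨i, j, hne, hfij⟩ := Fintype.exists_ne_map_eq_of_card_lt (fun i : Fin (n + 1) => f i)
      (by rw [Fintype.card_fin, ← Nat.card_eq_fintype_card]; omega)
    rcases Fin.lt_or_lt_of_ne hne with h | h
    · exact ⟨i, j, h, j.is_le, hfij⟩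
    · exact ⟨j, i, h, i.is_le, hfij.symm⟩
  exact ⟨f i, segment i.zero_le (by omega), .head' (hf i (by omega)) (hfij ▸ segment hij hjn),
    hfij ▸ segment hjn le_rfl⟩

section KnowledgeNFA

open Relation

variable {X U Y : Type} {S : Sys X U Y}

/-- `Post_α^β(s)` for an arbitrary set `s` of starting states. -/
def obsSteps (S : Sys X U Y) (s : Set X) (l : List (U × Y)) : Set X :=
  l.foldl (fun s p => obsStep S s p.1 p.2) s

theorem reachIO_eq_obsSteps (y0 : Y) (l : List (U × Y)) :
    ReachIO S y0 l = obsSteps S {x | S.H x = y0} l := rfl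

theorem obsSteps_append (s : Set X) (l₁ l₂ : List (U × Y)) :
    obsSteps S s (l₁ ++ l₂) = obsSteps S (obsSteps S s l₁) l₂ :=
  List.foldl_append

theorem obsStep_mono {s t : Set X} (h : s ⊆ t) (u : U) (y : Y) :
    obsStep S s u y ⊆ obsStep S t u y :=
  fun _ ⟨⟨x, hx, htr⟩, hH⟩ => ⟨⟨x, h hx, htr⟩, hH⟩

theorem obsSteps_mono {s t : Set X} (h : s ⊆ t) (l : List (U × Y)) :
    obsSteps S s l ⊆ obsSteps S t l := by
  induction l generalizing s t with
  | nil => exact h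
  | cons p l ih => exact ih (obsStep_mono h p.1 p.2)

theorem exists_long_obsSteps_of_subset_obsSteps {z : Set X} {l : List (U × Y)} (hl : l ≠ [])
    (hz : z ⊆ obsSteps S z l) (N : ℕ) :
    ∃ l' : List (U × Y), N ≤ l'.length ∧ z ⊆ obsSteps S z l' := by
  induction N with
  | zero => exact ⟨[], le_rfl, subset_rfl⟩
  | succ N ih =>
    obtain ⟨l', hlen, hl'⟩ := ih
    refine ⟨l' ++ l, ?_, ?_⟩
    · simp only [List.length_append]
      have := List.length_pos_iff.mpr hl
      omega
    · rw [obsSteps_append]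
      exact hz.trans (obsSteps_mono hl' l)

theorem AR.exists_eq_some_nonempty {a b : Option (Set X)} (h : AR S a b) :
    ∃ z, b = some z ∧ z.Nonempty := by
  obtain ⟨⟨_ | u, y⟩, h⟩ := h <;> rcases a with _ | q <;> rcases b with _ | z <;>
    first | exact h.elim | exact ⟨z, rfl, h.1⟩

theorem AR.exists_subset_output {b : Option (Set X)} (h : AR S none b) :
    ∃ z y, b = some z ∧ z ⊆ {x | S.H x = y} := by
  obtain ⟨⟨_ | u, y⟩, h⟩ := h <;> rcases b with _ | z <;>
    first | exact h.elim | exact ⟨z, y, rfl, h.2.2⟩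

theorem AR.exists_subset_obsStep {q : Set X} {b : Option (Set X)} (h : AR S (some q) b) :
    ∃ z u y, b = some z ∧ z ⊆ obsStep S q u y := by
  obtain ⟨⟨_ | u, y⟩, h⟩ := h <;> rcases b with _ | z <;>
    first | exact h.elim | exact ⟨z, u, y, rfl, h.2.2⟩

theorem AR.none_pair {a b : X} {y : Y} (ha : S.H a = y) (hb : S.H b = y) :
    AR S none (some {a, b}) :=
  ⟨(none, y), ⟨a, by simp⟩, ⟨a, b, rfl⟩, Set.pair_subset_iff.mpr ⟨ha, hb⟩⟩

theorem AR.some_pair {q : Set X} {a b : X} {u : U} {y : Y} (ha : a ∈ obsStep S q u y)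
    (hb : b ∈ obsStep S q u y) : AR S (some q) (some {a, b}) :=
  ⟨(some u, y), ⟨a, by simp⟩, ⟨a, b, rfl⟩, Set.pair_subset_iff.mpr ⟨ha, hb⟩⟩

theorem exists_subset_obsSteps_of_reflTransGen {z : Set X} {b : Option (Set X)}
    (h : ReflTransGen (AR S) (some z) b) : ∃ s l, b = some s ∧ s ⊆ obsSteps S z l := by
  induction h with
  | refl => exact ⟨z, [], rfl, subset_rfl⟩
  | tail _ hstep ih =>
    obtain ⟨s, l, rfl, hs⟩ := ih
    obtain ⟨s', u, y, rfl, hs'⟩ := hstep.exists_subset_obsStep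
    refine ⟨s', l ++ [(u, y)], rfl, ?_⟩
    rw [obsSteps_append]
    exact hs'.trans (obsStep_mono hs u y)

theorem exists_subset_obsSteps_of_transGen {z s : Set X}
    (h : TransGen (AR S) (some z) (some s)) : ∃ l ≠ [], s ⊆ obsSteps S z l := by
  obtain ⟨b, hzb, hbs⟩ := TransGen.head'_iff.mp h
  obtain ⟨z', u, y, rfl, hz'⟩ := hzb.exists_subset_obsStep
  obtain ⟨s', l, hs', hs⟩ := exists_subset_obsSteps_of_reflTransGen hbs
  cases hs'
  exact ⟨(u, y) :: l, List.cons_ne_nil _ _, hs.trans (obsSteps_mono hz' l)⟩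

theorem exists_subset_reachIO_of_reflTransGen {s : Set X}
    (h : ReflTransGen (AR S) none (some s)) : ∃ y0 l, s ⊆ ReachIO S y0 l := by
  obtain ⟨b, hb, hbs⟩ := h.cases_head.resolve_left nofun
  obtain ⟨z, y0, rfl, hz⟩ := hb.exists_subset_output
  obtain ⟨s', l, hs', hs⟩ := exists_subset_obsSteps_of_reflTransGen hbs
  cases hs'
  exact ⟨y0, l, hs.trans (obsSteps_mono hz l)⟩

theorem nonempty_of_some_mem_LP {s : Set X} (hs : some s ∈ LP S) : s.Nonempty := by
  obtain ⟨c, hpre, hcyc, hpost⟩ := hs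
  obtain ⟨b, -, hb⟩ :=
    (hpre.trans (hcyc.to_reflTransGen.trans hpost)).cases_tail.resolve_left nofun
  obtain ⟨z, hz, hne⟩ := hb.exists_eq_some_nonempty
  exact Option.some_injective _ hz ▸ hne

theorem exists_long_reachIO_of_mem_LP {s : Set X} (hs : some s ∈ LP S) (N : ℕ) :
    ∃ y0 l, N ≤ l.length ∧ s ⊆ ReachIO S y0 l := by
  obtain ⟨c, hpre, hcyc, hpost⟩ := hs
  obtain ⟨b, -, hbc⟩ := TransGen.tail'_iff.mp hcyc
  obtain ⟨z, rfl, -⟩ := hbc.exists_eq_some_nonempty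
  obtain ⟨y0, lpre, hpre⟩ := exists_subset_reachIO_of_reflTransGen hpre
  obtain ⟨lcyc, hlcyc, hcyc⟩ := exists_subset_obsSteps_of_transGen hcyc
  obtain ⟨lN, hlN, hpump⟩ := exists_long_obsSteps_of_subset_obsSteps hlcyc hcyc N
  obtain ⟨s', lpost, hs', hpost⟩ := exists_subset_obsSteps_of_reflTransGen hpost
  cases hs'
  refine ⟨y0, lpre ++ lN ++ lpost, by simp only [List.length_append]; omega, ?_⟩
  rw [reachIO_eq_obsSteps, obsSteps_append, obsSteps_append]
  exact hpost.trans <| obsSteps_mono (hpump.trans <| obsSteps_mono hpre lN) lpost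

theorem exists_pair_run_of_mem_obsSteps {s : Set X} {l : List (U × Y)} {a b : X}
    (ha : a ∈ obsSteps S s l) (hb : b ∈ obsSteps S s l) :
    ∃ a₀ ∈ s, ∃ b₀ ∈ s, ∃ f : ℕ → Set X, f 0 = {a₀, b₀} ∧ f l.length = {a, b} ∧
      ∀ i < l.length, AR S (some (f i)) (some (f (i + 1))) := by
  induction l generalizing s with
  | nil => exact ⟨a, ha, b, hb, fun _ => {a, b}, rfl, rfl, nofun⟩
  | cons p l ih =>
    obtain ⟨a₁, ha₁, b₁, hb₁, f, hf0, hfl, hf⟩ := ih ha hb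
    obtain ⟨⟨a₀, ha₀, hta⟩, hHa⟩ := ha₁
    obtain ⟨⟨b₀, hb₀, htb⟩, hHb⟩ := hb₁
    refine ⟨a₀, ha₀, b₀, hb₀, fun | 0 => {a₀, b₀} | i + 1 => f i, rfl, hfl, ?_⟩
    rintro (_ | i) hi
    · show AR S (some {a₀, b₀}) (some (f 0))
      rw [hf0]
      exact .some_pair ⟨⟨a₀, by simp, hta⟩, hHa⟩ ⟨⟨b₀, by simp, htb⟩, hHb⟩
    · exact hf i (by simpa using hi)

theorem pair_mem_LP_of_mem_reachIO [Finite X] {y0 : Y} {l : List (U × Y)} {a b : X}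
    (hl : Nat.card (Option (Set X)) ≤ l.length)
    (ha : a ∈ ReachIO S y0 l) (hb : b ∈ ReachIO S y0 l) : some {a, b} ∈ LP S := by
  obtain ⟨a₀, ha₀, b₀, hb₀, f, hf0, hfl, hf⟩ := exists_pair_run_of_mem_obsSteps ha hb
  let run : ℕ → Option (Set X) := fun | 0 => none | i + 1 => some (f i)
  have hrun : ∀ i < l.length + 1, AR S (run i) (run (i + 1)) := by
    rintro (_ | i) hi
    · show AR S none (some (f 0))
      rw [hf0]
      exact .none_pair ha₀ hb₀
    · exact hf i (by omega)
  obtain ⟨c, hpre, hcyc, hpost⟩ := exists_cycle_of_card_le (by omega) hrun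
  exact ⟨c, hpre, hcyc, hfl ▸ hpost⟩

end KnowledgeNFA

theorem detectable_iff_nfa_general {X U Y : Type} [Finite X] (S : Sys X U Y) :
    Detectable S ↔ ∀ s : Set X, some s ∈ LP S → ∃ a, s = {a} := by
  constructor
  · rintro ⟨N, hN⟩ s hs
    obtain ⟨y0, l, hl, hsub⟩ := exists_long_reachIO_of_mem_LP hs N
    obtain ⟨a, ha⟩ := nonempty_of_some_mem_LP hs
    exact ⟨a, ((hN y0 l hl).anti hsub).eq_singleton_of_mem ha⟩
  · intro hLP
    refine ⟨Nat.card (Option (Set X)), fun y0 l hl a ha b hb => ?_⟩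
    obtain ⟨x, hx⟩ := hLP _ (pair_mem_LP_of_mem_reachIO hl ha hb)
    have hab := Set.pair_subset_iff.mp hx.subset
    exact hab.1.trans hab.2.symm

/-- A finite system with all states initial is detectable iff every state of its
knowledge NFA reachable from some cycle is a singleton subset of the state set. -/
theorem detectable_iff_nfa {X U Y : Type} [Finite X] [Finite U] [Finite Y]
    (S : Sys X U Y) (hinit : S.init = Set.univ) :
    Detectable S ↔ ∀ s : Set X, some s ∈ LP S → ∃ a, s = {a} :=
  detectable_iff_nfa_general S
end

section
/- If the finite system S_q is detectable, then for every input sequence α of length at least the transient period T_t of its knowledge-NFA A, and every output sequence β of length |α|+1, the set of states of S_q consistent with (α, β) has cardinality at most 1. -/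
/-!
Two states consistent with the same input/output history span a run of the knowledge NFA
from `⋄` to their pair `{x₁, x₂}`. After `T_t` letters that run has entered the limit set,
which no run leaves. A state of the limit set ends runs of every length (go round its cycle
often enough), so each of its elements is consistent with arbitrarily long histories, and
detectability makes it a singleton.
-/

open Relation

theorem Relation.exists_cycle_of_chain_of_natCard_le {α : Type*} [Finite α] {r : α → α → Prop}
    (f : ℕ → α) {n : ℕ} (hn : Nat.card α ≤ n) (hf : ∀ i < n, r (f i) (f (i + 1))) :
    ∃ c, ReflTransGen r (f 0) c ∧ TransGen r c c ∧ ReflTransGen r c (f n) := by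
  classical
  cases nonempty_fintype α
  have hcard : (Finset.univ : Finset α).card < (Finset.range (n + 1)).card := by
    rw [Finset.card_univ, ← Nat.card_eq_fintype_card, Finset.card_range]
    omega
  obtain ⟨i, hi, j, hj, hne, heq⟩ :=
    Finset.exists_ne_map_eq_of_card_lt_of_maps_to hcard (f := f) (fun _ _ ↦ Finset.mem_univ _)
  rw [Finset.mem_range] at hi hj
  wlog hij : i < j generalizing i j
  · exact this j hj i hi hne.symm heq.symm (by omega)
  have hstep : ∀ a b, b ≤ n → ∀ k ∈ Set.Ico a b, r (f k) (f (Order.succ k)) :=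
    fun _ _ hb k hk ↦ hf k (hk.2.trans_le hb)
  have path : ∀ a b, a ≤ b → b ≤ n → ReflTransGen r (f a) (f b) := fun a b hab hb ↦
    (reflTransGen_of_succ_of_le (fun a b ↦ r (f a) (f b)) (hstep a b hb) hab).lift f
      fun _ _ h ↦ h
  refine ⟨f i, path 0 i (Nat.zero_le i) (by omega), ?_, path i n (by omega) le_rfl⟩
  have hcycle : TransGen r (f i) (f j) :=
    (transGen_of_succ_of_lt (fun a b ↦ r (f a) (f b)) (hstep i j (by omega)) hij).lift f
      fun _ _ h ↦ h
  rwa [← heq] at hcycle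

section KnowledgeNFA

variable {X U Y : Type} (S : Sys X U Y)

theorem adeltaStar_append {a b : Option (Set X)} (L₁ L₂ : List (Option U × Y)) :
    AdeltaStar S a (L₁ ++ L₂) b ↔ ∃ c, AdeltaStar S a L₁ c ∧ AdeltaStar S c L₂ b := by
  induction L₁ generalizing a with
  | nil => simp [AdeltaStar]
  | cons l L₁ ih => simp only [List.cons_append, AdeltaStar, ih]; grind

theorem adeltaStar_append_singleton {a b c : Option (Set X)} {L : List (Option U × Y)}
    {l : Option U × Y} (hL : AdeltaStar S a L b) (hl : Adelta S b l c) :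
    AdeltaStar S a (L ++ [l]) c :=
  (adeltaStar_append S L [l]).mpr ⟨b, hL, c, hl, rfl⟩

theorem exists_chain_of_adeltaStar {L : List (Option U × Y)} {a b : Option (Set X)}
    (h : AdeltaStar S a L b) :
    ∃ f : ℕ → Option (Set X), f 0 = a ∧ f L.length = b ∧
      ∀ i < L.length, AR S (f i) (f (i + 1)) := by
  induction L generalizing a with
  | nil => exact ⟨fun _ ↦ a, rfl, h, by simp⟩
  | cons l L ih =>
    obtain ⟨c, hc, hrest⟩ := h
    obtain ⟨g, hg0, hgb, hg⟩ := ih hrest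
    refine ⟨fun i ↦ i.casesOn a g, rfl, hgb, ?_⟩
    rintro (_ | i) hi
    · exact show AR S a (g 0) from hg0 ▸ ⟨l, hc⟩
    · exact hg i (by simpa using hi)

theorem reflTransGen_of_adeltaStar {L : List (Option U × Y)} {a b : Option (Set X)}
    (h : AdeltaStar S a L b) : ReflTransGen (AR S) a b := by
  induction L generalizing a with
  | nil => exact h ▸ .refl
  | cons l L ih =>
    obtain ⟨c, hc, hrest⟩ := h
    exact .head ⟨l, hc⟩ (ih hrest)

theorem exists_adeltaStar_of_reflTransGen {a b : Option (Set X)}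
    (h : ReflTransGen (AR S) a b) : ∃ L, AdeltaStar S a L b := by
  induction h with
  | refl => exact ⟨[], rfl⟩
  | tail _ hbc ih =>
    obtain ⟨L, hL⟩ := ih
    obtain ⟨l, hl⟩ := hbc
    exact ⟨L ++ [l], adeltaStar_append_singleton S hL hl⟩

theorem exists_adeltaStar_of_transGen {a b : Option (Set X)}
    (h : TransGen (AR S) a b) : ∃ L, L ≠ [] ∧ AdeltaStar S a L b := by
  obtain ⟨c, hac, ⟨l, hl⟩⟩ := TransGen.tail'_iff.mp h
  obtain ⟨L, hL⟩ := exists_adeltaStar_of_reflTransGen S hac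
  exact ⟨L ++ [l], by simp, adeltaStar_append_singleton S hL hl⟩

theorem exists_long_adeltaStar_of_transGen_self {c : Option (Set X)}
    (h : TransGen (AR S) c c) (m : ℕ) : ∃ L, m ≤ L.length ∧ AdeltaStar S c L c := by
  obtain ⟨L, hne, hL⟩ := exists_adeltaStar_of_transGen S h
  induction m with
  | zero => exact ⟨[], le_rfl, rfl⟩
  | succ m ih =>
    obtain ⟨L', hm, hL'⟩ := ih
    refine ⟨L ++ L', ?_, (adeltaStar_append S L L').mpr ⟨c, hL, hL'⟩⟩
    have := List.length_pos_of_ne_nil hne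
    simp only [List.length_append]
    omega

theorem mem_LP_of_adeltaStar {q q' : Option (Set X)} (hq : q ∈ LP S)
    {L : List (Option U × Y)} (h : AdeltaStar S q L q') : q' ∈ LP S :=
  let ⟨c, h₁, h₂, h₃⟩ := hq
  ⟨c, h₁, h₂, h₃.trans (reflTransGen_of_adeltaStar S h)⟩

theorem subset_foldl_obsStep_of_adeltaStar {L : List (Option U × Y)} {q z s : Set X}
    (h : AdeltaStar S (some q) L (some z)) (hq : q ⊆ s) :
    ∃ l : List (U × Y), l.length = L.length ∧
      z ⊆ l.foldl (fun t p ↦ obsStep S t p.1 p.2) s := by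
  induction L generalizing q s with
  | nil => exact ⟨[], rfl, Option.some.inj h ▸ hq⟩
  | cons l L ih =>
    obtain ⟨c, hstep, hrest⟩ := h
    obtain ⟨_ | u, y⟩ := l
    · cases c <;> exact hstep.elim
    cases c with
    | none => exact hstep.elim
    | some w =>
      obtain ⟨l', hlen, hz⟩ := ih hrest (s := obsStep S s u y)
        (hstep.2.2.trans fun x ⟨⟨x₀, hx₀, htr⟩, hH⟩ ↦ ⟨⟨x₀, hq hx₀, htr⟩, hH⟩)
      exact ⟨(u, y) :: l', by simp [hlen], hz⟩

theorem subset_reachIO_of_adeltaStar {L : List (Option U × Y)} {z : Set X}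
    (h : AdeltaStar S none L (some z)) :
    ∃ (y₀ : Y) (l : List (U × Y)), L.length = l.length + 1 ∧ z ⊆ ReachIO S y₀ l := by
  obtain _ | ⟨⟨_ | u, y⟩, L⟩ := L
  · cases h
  · obtain ⟨_ | w, hstep, hrest⟩ := h
    · exact hstep.elim
    obtain ⟨l, hlen, hz⟩ := subset_foldl_obsStep_of_adeltaStar S hrest hstep.2.2
    exact ⟨y, l, by simp [hlen], hz⟩
  · obtain ⟨c, hstep, -⟩ := h
    cases c <;> exact hstep.elim

theorem subsingleton_of_some_mem_LP (hdet : Detectable S) {z : Set X} (hz : some z ∈ LP S) :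
    z.Subsingleton := by
  obtain ⟨N, hN⟩ := hdet
  obtain ⟨c, h₁, h₂, h₃⟩ := hz
  obtain ⟨L₁, hL₁⟩ := exists_adeltaStar_of_reflTransGen S h₁
  obtain ⟨L₂, hN₂, hL₂⟩ := exists_long_adeltaStar_of_transGen_self S h₂ (N + 1)
  obtain ⟨L₃, hL₃⟩ := exists_adeltaStar_of_reflTransGen S h₃
  have hrun : AdeltaStar S none (L₁ ++ L₂ ++ L₃) (some z) :=
    (adeltaStar_append S _ _).mpr ⟨c, (adeltaStar_append S _ _).mpr ⟨c, hL₁, hL₂⟩, hL₃⟩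
  obtain ⟨y₀, l, hlen, hz⟩ := subset_reachIO_of_adeltaStar S hrun
  simp only [List.length_append] at hlen
  exact (hN y₀ l (by omega)).anti hz

theorem adeltaStar_pair_of_mem_reachIO {y₀ : Y} {l : List (U × Y)} {x₁ x₂ : X}
    (h₁ : x₁ ∈ ReachIO S y₀ l) (h₂ : x₂ ∈ ReachIO S y₀ l) :
    AdeltaStar S none ((none, y₀) :: l.map fun p ↦ (some p.1, p.2)) (some {x₁, x₂}) := by
  induction l using List.reverseRecOn generalizing x₁ x₂ with
  | nil =>
    refine ⟨some {x₁, x₂}, ⟨⟨x₁, by simp⟩, ⟨x₁, x₂, rfl⟩, ?_⟩, rfl⟩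
    rintro x (rfl | rfl)
    exacts [h₁, h₂]
  | append_singleton l p ih =>
    rw [ReachIO, List.foldl_append] at h₁ h₂
    obtain ⟨⟨x₁', hx₁', htr₁⟩, hH₁⟩ := h₁
    obtain ⟨⟨x₂', hx₂', htr₂⟩, hH₂⟩ := h₂
    rw [List.map_append, ← List.cons_append]
    refine adeltaStar_append_singleton S (ih hx₁' hx₂') ⟨⟨x₁, by simp⟩, ⟨x₁, x₂, rfl⟩, ?_⟩
    rintro x (rfl | rfl)
    exacts [⟨⟨x₁', by simp, htr₁⟩, hH₁⟩, ⟨⟨x₂', by simp, htr₂⟩, hH₂⟩]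

theorem transientOK_of_natCard_le [Finite X] {t : ℕ} (ht : Nat.card (Option (Set X)) ≤ t + 1) :
    transientOK S t := by
  intro y₀ l q hlen hrun
  obtain ⟨f, hf0, hfq, hf⟩ := exists_chain_of_adeltaStar S hrun
  simp only [List.length_cons, List.length_map, hlen] at hfq hf
  obtain ⟨c, h₁, h₂, h₃⟩ := exists_cycle_of_chain_of_natCard_le f ht hf
  exact ⟨c, hf0 ▸ h₁, h₂, hfq ▸ h₃⟩

theorem transientOK_Tt [Finite X] : transientOK S (Tt S) :=
  Nat.sInf_mem (s := {t | transientOK S t}) ⟨_, transientOK_of_natCard_le S le_self_add⟩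

end KnowledgeNFA

theorem detectable_after_transient_general {X U Y : Type} [Finite X]
    (S : Sys X U Y) (hdet : Detectable S) :
    ∀ (y0 : Y) (l : List (U × Y)), Tt S ≤ l.length →
      (ReachIO S y0 l).Subsingleton := by
  intro y0 l hlen x₁ h₁ x₂ h₂
  have hrun := adeltaStar_pair_of_mem_reachIO S h₁ h₂
  rw [← List.take_append_drop (Tt S) l, List.map_append, ← List.cons_append] at hrun
  obtain ⟨c, hc, hcz⟩ := (adeltaStar_append S _ _).mp hrun
  have hcLP : c ∈ LP S := transientOK_Tt S y0 _ c (by simpa using hlen) hc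
  exact subsingleton_of_some_mem_LP S hdet (mem_LP_of_adeltaStar S hcLP hcz) (by simp) (by simp)

/-- If `S` is detectable, then any input sequence of length at least the transient
period `T_t`, together with its matching observation sequence, determines the
current state of `S` up to at most one candidate. -/
theorem detectable_after_transient {X U Y : Type} [Finite X] [Finite U] [Finite Y]
    (S : Sys X U Y) (hinit : S.init = Set.univ) (hdet : Detectable S) :
    ∀ (y0 : Y) (l : List (U × Y)), Tt S ≤ l.length →
      (ReachIO S y0 l).Subsingleton :=
  detectable_after_transient_general S hdet
end

section
/- Let S_q be a detectable finite system with knowledge-NFA A whose limit points are all singletons, and let D be the detector system built from S_q and A. Then after T_t steps of feeding inputs and matching observations of S_q into D, the output of D is never the dummy symbol p, and it equals the unique current state of S_q consistent with the observed input-output history. -/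
/-- The NFA transition consumed by the detector on input/observation `(u, y)`:
from the dummy initial state `⋄` the label `(φ, y)` is used, otherwise `(u, y)`. -/
def AdeltaIO {X U Y : Type} (S : Sys X U Y) (q : Option (Set X)) (u : U) (y : Y)
    (q' : Option (Set X)) : Prop :=
  (q = none ∧ Adelta S none (none, y) q') ∨ Adelta S q (some u, y) q'

/-- Transition relation of the detector `D`: states `(x_q, q, f)` simultaneously
simulate an `S`-transition and an `A`-transition; the flag `f` is raised exactly
when the `A`-state becomes a singleton. -/
def Dtr {X U Y : Type} (S : Sys X U Y)
    (d : X × Option (Set X) × Bool) (i : U × Y)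
    (d' : X × Option (Set X) × Bool) : Prop :=
  S.tr d.1 i.1 d'.1 ∧ AdeltaIO S d.2.1 i.1 i.2 d'.2.1 ∧
  ((d.2.2 = false ∧ d'.2.2 = true ∧ (∀ s, d'.2.1 = some s → s.Subsingleton)) ∨
   (d'.2.2 = d.2.2 ∧
     ((∃ s a b, d'.2.1 = some s ∧ a ∈ s ∧ b ∈ s ∧ a ≠ b) ∨ d.2.2 = true)))

/-- Detector output map: the dummy symbol `p` is `none`; when the flag is raised the
detector outputs its state estimate. -/
def Dout {X U Y : Type} (_S : Sys X U Y) (d : X × Option (Set X) × Bool) :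
    Option (Set X) :=
  if d.2.2 = true then d.2.1 else none

section AuxDetector

variable {X U Y : Type}

lemma adeltaStar_snoc (S : Sys X U Y) {a c c' : Option (Set X)}
    {l : List (Option U × Y)} {p : Option U × Y}
    (h : AdeltaStar S a l c) (h2 : Adelta S c p c') :
    AdeltaStar S a (l ++ [p]) c' := by
  induction l generalizing a with
  | nil => exact ⟨c', h ▸ h2, rfl⟩
  | cons q t ih =>
    obtain ⟨b, hb1, hb2⟩ := h
    exact ⟨b, hb1, ih hb2⟩

lemma adeltaStar_split (S : Sys X U Y) {a b : Option (Set X)}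
    {l1 l2 : List (Option U × Y)}
    (h : AdeltaStar S a (l1 ++ l2) b) :
    ∃ c, AdeltaStar S a l1 c ∧ AdeltaStar S c l2 b := by
  induction l1 generalizing a with
  | nil => exact ⟨a, rfl, h⟩
  | cons q t ih =>
    obtain ⟨e, he1, he2⟩ := h
    obtain ⟨c, hc1, hc2⟩ := ih he2
    exact ⟨c, ⟨e, he1, hc1⟩, hc2⟩

lemma chain_rtg {α : Type*} {r : α → α → Prop} {g : ℕ → α} {L : ℕ}
    (h : ∀ k < L, r (g k) (g (k+1))) {i j : ℕ} (hij : i ≤ j) (hj : j ≤ L) :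
    Relation.ReflTransGen r (g i) (g j) := by
  induction j, hij using Nat.le_induction with
  | base => exact Relation.ReflTransGen.refl
  | succ j hij ih =>
    exact Relation.ReflTransGen.tail (ih (by omega)) (h j (by omega))

lemma chain_tg {α : Type*} {r : α → α → Prop} {g : ℕ → α} {L : ℕ}
    (h : ∀ k < L, r (g k) (g (k+1))) {i j : ℕ} (hij : i < j) (hj : j ≤ L) :
    Relation.TransGen r (g i) (g j) := by
  obtain ⟨k, rfl⟩ : ∃ k, j = k + 1 := ⟨j - 1, by omega⟩
  exact Relation.TransGen.tail' (chain_rtg h (by omega) (by omega)) (h k (by omega))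

lemma adeltaStar_chain (S : Sys X U Y) {a b : Option (Set X)}
    {l : List (Option U × Y)} (h : AdeltaStar S a l b) :
    ∃ g : ℕ → Option (Set X), g 0 = a ∧ g l.length = b ∧
      ∀ k < l.length, AR S (g k) (g (k+1)) := by
  induction l generalizing a with
  | nil => exact ⟨fun _ => a, rfl, h, by intro k hk; simp at hk⟩
  | cons q t ih =>
    obtain ⟨c, hc1, hc2⟩ := h
    obtain ⟨g', hg0, hgl, hgs⟩ := ih hc2
    refine ⟨fun n => match n with | 0 => a | n+1 => g' n, rfl, hgl, ?_⟩
    intro k hk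
    match k with
    | 0 =>
      refine ⟨q, ?_⟩
      show Adelta S a q (g' 0)
      rw [hg0]; exact hc1
    | k+1 => exact hgs k (by simpa using hk)

lemma LP_step (S : Sys X U Y) {q q' : Option (Set X)}
    (h : q ∈ LP S) (h2 : AR S q q') : q' ∈ LP S := by
  obtain ⟨c, h1, h2', h3⟩ := h
  exact ⟨c, h1, h2', h3.tail h2⟩

lemma transient_exists (S : Sys X U Y) [Finite X] :
    transientOK S (Nat.card (Option (Set X))) := by
  intro y0 l q hlen hstar
  set T := Nat.card (Option (Set X)) with hT
  obtain ⟨g, hg0, hgl, hgs⟩ := adeltaStar_chain S hstar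
  have hlen' : ((none, y0) :: l.map (fun p => (some p.1, p.2))).length = T + 1 := by
    simp [hlen]
  rw [hlen'] at hgl hgs
  haveI : Fintype (Set X) := Fintype.ofFinite _
  have hcard : Fintype.card (Option (Set X)) < Fintype.card (Fin (T + 2)) := by
    simp [hT, Nat.card_eq_fintype_card]
  obtain ⟨i, j, hij, hfeq⟩ :=
    Fintype.exists_ne_map_eq_of_card_lt (fun i : Fin (T + 2) => g i.val) hcard
  have hi2 : (i : ℕ) ≤ T + 1 := by omega
  have hj2 : (j : ℕ) ≤ T + 1 := by omega
  rcases lt_or_gt_of_ne (fun h => hij (Fin.ext h) : (i : ℕ) ≠ (j : ℕ)) with hlt | hgt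
  · refine ⟨g i.val, ?_, ?_, ?_⟩
    · exact hg0 ▸ chain_rtg hgs (Nat.zero_le _) hi2
    · have := chain_tg hgs hlt hj2
      rwa [← hfeq] at this
    · exact hgl ▸ chain_rtg hgs hi2 le_rfl
  · refine ⟨g j.val, ?_, ?_, ?_⟩
    · exact hg0 ▸ chain_rtg hgs (Nat.zero_le _) hj2
    · have := chain_tg hgs hgt hi2
      rwa [hfeq] at this
    · exact hgl ▸ chain_rtg hgs hj2 le_rfl

lemma transient_mono (S : Sys X U Y) {t : ℕ} (h : transientOK S t) :
    transientOK S (t + 1) := by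
  intro y0 l q hlen hstar
  rcases List.eq_nil_or_concat l with rfl | ⟨l', p, rfl⟩
  · simp at hlen
  · rw [List.concat_eq_append] at hlen hstar
    have hmap : ((none, y0) :: (l' ++ [p]).map (fun p => ((some p.1 : Option U), p.2)))
        = ((none, y0) :: l'.map (fun p => (some p.1, p.2))) ++ [(some p.1, p.2)] := by
      simp
    rw [hmap] at hstar
    obtain ⟨c, hc1, hc2⟩ := adeltaStar_split S hstar
    obtain ⟨e, he1, he2⟩ := hc2
    have hl' : l'.length = t := by simpa using hlen
    exact LP_step S (h y0 l' c hl' hc1) ⟨_, he2 ▸ he1⟩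

lemma transient_ge (S : Sys X U Y) {t t' : ℕ} (h : transientOK S t)
    (htt : t ≤ t') : transientOK S t' := by
  induction t', htt using Nat.le_induction with
  | base => exact h
  | succ t' _ ih => exact transient_mono S ih

lemma Tt_transient (S : Sys X U Y) [Finite X] : transientOK S (Tt S) := by
  have hne : {t | transientOK S t}.Nonempty :=
    ⟨Nat.card (Option (Set X)), transient_exists S⟩
  exact Nat.sInf_mem hne

lemma reachIO_snoc (S : Sys X U Y) (y0 : Y) (l : List (U × Y)) (p : U × Y) :
    ReachIO S y0 (l ++ [p]) = obsStep S (ReachIO S y0 l) p.1 p.2 := by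
  simp [ReachIO, List.foldl_append]

lemma pair_reach (S : Sys X U Y) (y0 : Y) (l : List (U × Y)) {a b : X}
    (ha : a ∈ ReachIO S y0 l) (hb : b ∈ ReachIO S y0 l) :
    AdeltaStar S none ((none, y0) :: l.map (fun p => (some p.1, p.2)))
      (some {a, b}) := by
  induction l using List.reverseRecOn generalizing a b with
  | nil =>
    refine ⟨some {a, b}, ⟨⟨a, by simp⟩, ⟨a, b, rfl⟩, ?_⟩, rfl⟩
    intro z hz
    rcases hz with rfl | rfl
    · exact ha
    · exact hb
  | append_singleton l p ih =>
    rw [reachIO_snoc] at ha hb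
    obtain ⟨⟨a', ha', hta⟩, hHa⟩ := ha
    obtain ⟨⟨b', hb', htb⟩, hHb⟩ := hb
    have hmap : ((none, y0) :: (l ++ [p]).map (fun p => ((some p.1 : Option U), p.2)))
        = ((none, y0) :: l.map (fun p => (some p.1, p.2))) ++ [(some p.1, p.2)] := by
      simp
    rw [hmap]
    refine adeltaStar_snoc S (ih ha' hb') ?_
    refine ⟨⟨a, by simp⟩, ⟨a, b, rfl⟩, ?_⟩
    intro z hz
    rcases hz with rfl | rfl
    · exact ⟨⟨a', by simp, hta⟩, hHa⟩
    · exact ⟨⟨b', by simp, htb⟩, hHb⟩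

lemma reach_subsingleton (S : Sys X U Y) [Finite X]
    (hLP : ∀ s : Set X, some s ∈ LP S → ∃ a, s = {a})
    (y0 : Y) (l : List (U × Y)) (hlen : Tt S ≤ l.length) :
    (ReachIO S y0 l).Subsingleton := by
  intro a ha b hb
  have hpath := pair_reach S y0 l ha hb
  have hLPmem := transient_ge S (Tt_transient S) hlen y0 l (some {a, b}) rfl hpath
  obtain ⟨c, hc⟩ := hLP _ hLPmem
  have ha' : a ∈ ({a, b} : Set X) := by simp
  have hb' : b ∈ ({a, b} : Set X) := by simp
  rw [hc] at ha' hb'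
  simp at ha' hb'
  rw [ha', hb']

end AuxDetector

/-- Detector correctness: feeding the detector with a valid input/observation
sequence of a detectable system for at least `T_t` steps raises the flag (so the
output is never the dummy symbol `p`) and the detector's knowledge component is the
singleton of the unique current state of `S` consistent with the history. -/
theorem detector_correct {X U Y : Type} [Finite X] [Finite U] [Finite Y]
    (S : Sys X U Y) (hinit : S.init = Set.univ)
    (hdet : Detectable S)
    (hLP : ∀ s : Set X, some s ∈ LP S → ∃ a, s = {a})
    (u : ℕ → U) (x : ℕ → X)
    (hrun : ∀ i, S.tr (x i) (u i) (x (i+1)))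
    (d : ℕ → X × Option (Set X) × Bool)
    (hd0 : (d 0).2.1 = none ∧ (d 0).2.2 = false)
    (hdrun : ∀ i, Dtr S (d i) (u i, S.H (x (i+1))) (d (i+1)))
    (n : ℕ) (hn : Tt S + 1 ≤ n) :
    (d n).2.2 = true ∧ (d n).2.1 = some {x n} ∧ Dout S (d n) ≠ none := by
  set lst : ℕ → List (U × Y) :=
    fun m => (List.range m).map (fun j => (u (j+1), S.H (x (j+2)))) with hlst
  have hlst_len : ∀ m, (lst m).length = m := by simp [hlst]
  have hlst_succ : ∀ m, lst (m+1) = lst m ++ [(u (m+1), S.H (x (m+2)))] := by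
    intro m; simp [hlst, List.range_succ]
  have hxmem : ∀ m, x (m+1) ∈ ReachIO S (S.H (x 1)) (lst m) := by
    intro m
    induction m with
    | zero => simp [hlst, ReachIO]
    | succ m ih =>
      rw [hlst_succ, reachIO_snoc]
      exact ⟨⟨x (m+1), ih, hrun (m+1)⟩, rfl⟩
  have hknow : ∀ m, ∃ z : Set X, (d (m+1)).2.1 = some z ∧ z.Nonempty ∧
      z ⊆ ReachIO S (S.H (x 1)) (lst m) := by
    intro m
    induction m with
    | zero =>
      have h0 := (hdrun 0).2.1
      rw [hd0.1] at h0
      rcases h0 with ⟨_, h⟩ | h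
      · cases hq' : (d 1).2.1 with
        | none => rw [hq'] at h; exact h.elim
        | some z =>
          rw [hq'] at h
          obtain ⟨hne, _, hsub⟩ := h
          exact ⟨z, rfl, hne, by simpa [hlst, ReachIO] using hsub⟩
      · cases hq' : (d 1).2.1 with
        | none => rw [hq'] at h; exact h.elim
        | some z => rw [hq'] at h; exact h.elim
    | succ m ih =>
      obtain ⟨z, hz, hzne, hzsub⟩ := ih
      have h0 := (hdrun (m+1)).2.1
      rw [hz] at h0
      rcases h0 with ⟨h, _⟩ | h
      · exact absurd h (by simp)
      · cases hq' : (d (m+2)).2.1 with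
        | none => rw [hq'] at h; exact h.elim
        | some z' =>
          rw [hq'] at h
          obtain ⟨hne, _, hsub⟩ := h
          refine ⟨z', rfl, hne, ?_⟩
          rw [hlst_succ, reachIO_snoc]
          intro a ha
          obtain ⟨⟨b, hb, htr⟩, hH⟩ := hsub ha
          exact ⟨⟨b, hzsub hb, htr⟩, hH⟩
  obtain ⟨m, rfl⟩ : ∃ m, n = m + 1 := ⟨n - 1, by omega⟩
  obtain ⟨z, hz, hzne, hzsub⟩ := hknow m
  have hss : (ReachIO S (S.H (x 1)) (lst m)).Subsingleton :=
    reach_subsingleton S hLP _ _ (by rw [hlst_len]; omega)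
  have hxR := hxmem m
  have hzx : z = {x (m+1)} := by
    obtain ⟨a, ha⟩ := hzne
    refine Set.eq_singleton_iff_unique_mem.mpr ⟨?_, fun b hb => hss (hzsub hb) hxR⟩
    have hax : a = x (m+1) := hss (hzsub ha) hxR
    exact hax ▸ ha
  have hflag : (d (m+1)).2.2 = true := by
    rcases (hdrun m).2.2 with ⟨_, hf, _⟩ | ⟨hfe, hcase⟩
    · exact hf
    · rcases hcase with ⟨s, a, b, hs, has, hbs, hab⟩ | hft
      · exfalso
        rw [hz] at hs
        injection hs with hs
        subst hs
        rw [hzx] at has hbs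
        simp at has hbs
        exact hab (has.trans hbs.symm)
      · rw [hfe, hft]
  refine ⟨hflag, by rw [hz, hzx], ?_⟩
  simp [Dout, hflag, hz, hzx]
end
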